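/- Let M be a finite monoid and w ∈ M* a word, with positions j < k and suppose w[j+1,k−1] evaluates to an element of an H-class H inside a J-class J. Suppose w[j+1,i] is the longest prefix starting at j+1 whose evaluation is ≥_J J, let yz denote its value where y = w[j+1,k−1] and z = w[k,i]. Then the map m_z restricted to H is a bijection onto the H-class of yz, and y = m_z⁻¹(yz). -/

import Mathlib

/-! In a finite monoid, `yz ≥_J y` forces `y R yz` (stability): from `y = p·y·(zq)` one gets
`y = pⁿ·y·(zq)ⁿ` for all `n`, and a period `d` of the powers of `zq` gives `y = y·(zq)^d = yz·a`.
Green's lemma then makes right multiplication by `z` a bijection from the H-class of `y` onto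
that of `yz`, inverted by right multiplication by `a`. -/

def RLe {M : Type*} [Monoid M] (x y : M) : Prop := ∃ a : M, x = y * a

def LLe {M : Type*} [Monoid M] (x y : M) : Prop := ∃ a : M, x = a * y

def GreenH {M : Type*} [Monoid M] (x y : M) : Prop :=
  (RLe x y ∧ RLe y x) ∧ (LLe x y ∧ LLe y x)

def JLe {M : Type*} [Monoid M] (x y : M) : Prop := ∃ a b : M, x = a * y * b

/-- The product `w_a ⋯ w_b` of the letters of `w` from position `a` to position `b`. -/
def wprod {M : Type*} [Monoid M] (w : ℕ → M) (a b : ℕ) : M :=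
  ((List.range' a (b + 1 - a)).map w).prod

theorem wprod_mul_wprod {M : Type*} [Monoid M] (w : ℕ → M) {a m b : ℕ}
    (ham : a ≤ m + 1) (hmb : m ≤ b) :
    wprod w a m * wprod w (m + 1) b = wprod w a b := by
  have hlen : b + 1 - a = (m + 1 - a) + (b + 1 - (m + 1)) := by omega
  have hmid : a + (m + 1 - a) = m + 1 := by omega
  rw [wprod, wprod, wprod, ← List.prod_append, ← List.map_append, hlen, ← List.range'_append_1,
    hmid]

theorem exists_pow_add_eq_pow {M : Type*} [Monoid M] [Finite M] (t : M) :
    ∃ m d : ℕ, 0 < d ∧ t ^ (m + d) = t ^ m := by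
  obtain ⟨m, n, hmn, h⟩ := Set.finite_univ.exists_lt_map_eq_of_forall_mem
    (f := fun n : ℕ => t ^ n) fun _ => Set.mem_univ _
  exact ⟨m, n - m, by omega, by rw [Nat.add_sub_cancel' hmn.le]; exact h.symm⟩

section Green

variable {M : Type*} [Monoid M] {u x y z a b : M}

theorem RLe.refl (x : M) : RLe x x := ⟨1, (mul_one x).symm⟩

theorem RLe.trans (hxy : RLe x y) (hyz : RLe y z) : RLe x z := by
  obtain ⟨c, rfl⟩ := hxy
  obtain ⟨d, rfl⟩ := hyz
  exact ⟨d * c, mul_assoc _ _ _⟩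

theorem rLe_mul_right (x b : M) : RLe (x * b) x := ⟨b, rfl⟩

theorem LLe.refl (x : M) : LLe x x := ⟨1, (one_mul x).symm⟩

theorem LLe.mul_right (h : LLe x y) (z : M) : LLe (x * z) (y * z) := by
  obtain ⟨c, rfl⟩ := h
  exact ⟨c, mul_assoc _ _ _⟩

theorem greenH_refl (x : M) : GreenH x x := ⟨⟨.refl x, .refl x⟩, .refl x, .refl x⟩

theorem mul_mul_eq_self_of_lLe (hx : x * b * z = x) (hu : LLe u x) : u * b * z = u := by
  obtain ⟨c, rfl⟩ := hu
  rw [mul_assoc c, mul_assoc c, hx]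

theorem exists_mul_mul_eq_of_jLe [Finite M] (h : JLe y (y * z)) : ∃ a, y * z * a = y := by
  obtain ⟨p, q, hpq⟩ := h
  have hstep : y = p * y * (z * q) := by simpa only [mul_assoc] using hpq
  have hpow : ∀ n : ℕ, y = p ^ n * y * (z * q) ^ n := by
    intro n
    induction n with
    | zero => simp
    | succ n ih =>
      calc y = p * (p ^ n * y * (z * q) ^ n) * (z * q) := by rw [← ih]; exact hstep
        _ = p ^ (n + 1) * y * (z * q) ^ (n + 1) := by
          rw [pow_succ', pow_succ]; simp only [mul_assoc]
  obtain ⟨m, d, hd, hper⟩ := exists_pow_add_eq_pow (z * q)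
  obtain ⟨d, rfl⟩ : ∃ d', d = d' + 1 := ⟨d - 1, by omega⟩
  refine ⟨q * (z * q) ^ d, ?_⟩
  calc y * z * (q * (z * q) ^ d) = y * (z * q) ^ (d + 1) := by
        rw [pow_succ']; simp only [mul_assoc]
    _ = p ^ m * y * (z * q) ^ (m + (d + 1)) := by
        conv_lhs => rw [hpow m]
        rw [pow_add _ m]; simp only [mul_assoc]
    _ = y := by rw [hper, ← hpow]

theorem GreenH.mul_right (h : y * z * a = y) (hu : GreenH u y) : GreenH (u * z) (y * z) := by
  obtain ⟨⟨huy, hyu⟩, hluy, hlyu⟩ := hu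
  have hu' : u * z * a = u := mul_mul_eq_self_of_lLe h hluy
  refine ⟨⟨?_, ?_⟩, hluy.mul_right z, hlyu.mul_right z⟩
  · exact ((rLe_mul_right u z).trans huy).trans ⟨a, h.symm⟩
  · exact ((rLe_mul_right y z).trans hyu).trans ⟨a, hu'.symm⟩

theorem bijOn_mul_right_greenH (h : y * z * a = y) :
    Set.BijOn (· * z) {u | GreenH u y} {u | GreenH u (y * z)} := by
  have h' : y * z * a * z = y * z := by rw [h]
  refine Set.InvOn.bijOn ⟨fun u hu => mul_mul_eq_self_of_lLe h hu.2.1,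
    fun v hv => mul_mul_eq_self_of_lLe h' hv.2.1⟩ (fun u hu => hu.mul_right h)
    fun v hv => h ▸ hv.mul_right h'

end Green

theorem infix_H_class_recovery_general {M : Type*} [Monoid M] [Finite M]
    (w : ℕ → M) (j k i : ℕ) (hjk : j < k) (hki : k ≤ i + 1)
    (hmax : JLe (wprod w (j + 1) (k - 1)) (wprod w (j + 1) i)) :
    Set.BijOn (fun u => u * wprod w k i)
        {u : M | GreenH u (wprod w (j + 1) (k - 1))}
        {u : M | GreenH u (wprod w (j + 1) (k - 1) * wprod w k i)} ∧
    (∀ u : M, GreenH u (wprod w (j + 1) (k - 1)) →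
      u * wprod w k i = wprod w (j + 1) (k - 1) * wprod w k i →
      u = wprod w (j + 1) (k - 1)) := by
  have hsplit : wprod w (j + 1) (k - 1) * wprod w k i = wprod w (j + 1) i := by
    obtain ⟨m, rfl⟩ : ∃ m, k = m + 1 := ⟨k - 1, by omega⟩
    exact wprod_mul_wprod w (by omega) (by omega)
  obtain ⟨a, ha⟩ := exists_mul_mul_eq_of_jLe (hsplit ▸ hmax)
  have hbij := bijOn_mul_right_greenH ha
  exact ⟨hbij, fun u hu hyz => hbij.injOn hu (greenH_refl _) hyz⟩

/-- If y = w[j+1,k−1] lies in the H-class H inside the J-class J, and w[j+1,i] is the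
    longest prefix starting at j+1 whose evaluation is ≥_J J, with z = w[k,i], then
    right multiplication by z is a bijection from H onto the H-class of yz, and y is
    the unique preimage of yz in H. -/
theorem infix_H_class_recovery {M : Type*} [Monoid M] [Finite M]
    (w : ℕ → M) (j k i : ℕ) (hjk : j < k) (hki : k ≤ i + 1)
    (hmax : JLe (wprod w (j + 1) (k - 1)) (wprod w (j + 1) i))
    (hmax' : ¬ JLe (wprod w (j + 1) (k - 1)) (wprod w (j + 1) (i + 1))) :
    Set.BijOn (fun u => u * wprod w k i)
        {u : M | GreenH u (wprod w (j + 1) (k - 1))}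
        {u : M | GreenH u (wprod w (j + 1) (k - 1) * wprod w k i)} ∧
    (∀ u : M, GreenH u (wprod w (j + 1) (k - 1)) →
      u * wprod w k i = wprod w (j + 1) (k - 1) * wprod w k i →
      u = wprod w (j + 1) (k - 1)) :=
  infix_H_class_recovery_general w j k i hjk hki hmax
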